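/- Let n > k be positive integers and let v^n be the Galerkin approximation of order n. Then the high-frequency component satisfies Σ_{i=k+1}^n ((v^n_i)'(t)² + λ_i² v^n_i(t)²) ≤ R_k(a,b) · L_k^+(t) for every t ≥ 0, where L_k^+(t) = (ν₂/ν₁)·exp(L H₀ λ_k t / ν₁²) and H₀ = Σ_i b_i² + M(Σ_i λ_i² a_i²). -/

import Mathlib

/-!
With `σ = Σ_{i≤n} λ_i² v_i²` and `σ_low` its part over the modes `i ≤ k`, consider
`F = Σ_{k<i≤n} v_i'² + M(σ) − M(σ_low)`. Since `M' = m ∈ [μ₁, μ₂]`, `F` is comparable to the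
high-mode energy: `ν₁ E_high ≤ F ≤ ν₂ E_high`. By the equation, the high-mode kinetic term cancels
the high-mode part of `M(σ)'`, leaving `F' = (m(σ) − m(σ_low)) σ_low'`. The Lipschitz bound gives
`|m(σ) − m(σ_low)| ≤ L (σ − σ_low) ≤ L F / ν₁`, while conservation of `Σ v_i'² + M(σ) ≤ H₀`, Young's
inequality and `λ_i ≤ λ_k` for `i ≤ k` give `ν₁ |σ_low'| ≤ λ_k H₀`. Hence
`F' ≤ (L H₀ λ_k / ν₁²) F`, and Grönwall's inequality concludes.
-/

open Filter Set

/-- Derivative from within the half line `[0, ∞)`. -/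
noncomputable def derIci (f : ℝ → ℝ) : ℝ → ℝ := derivWithin f (Set.Ici (0 : ℝ))

/-- The pair `(a, b)` belongs to the energy space `D(A^{1/2}) × H`. -/
def InEnergy (lam a b : ℕ → ℝ) : Prop :=
  Summable fun i => (b i) ^ 2 + (lam i) ^ 2 * (a i) ^ 2

/-- `R_k(a,b) = Σ_{i>k} (b_i² + λ_i² a_i²)`. -/
noncomputable def Rk (lam a b : ℕ → ℝ) (k : ℕ) : ℝ :=
  ∑' i : ℕ, if k < i then (b i) ^ 2 + (lam i) ^ 2 * (a i) ^ 2 else 0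

/-- Lacunary (spectral gap) data: `R_k(a,b)·k²·exp(k λ_k) ≤ 1` for infinitely many
positive integers `k`. -/
def Lacunary (lam a b : ℕ → ℝ) : Prop :=
  InEnergy lam a b ∧
    {k : ℕ | 0 < k ∧
      Rk lam a b k * (k : ℝ) ^ 2 * Real.exp ((k : ℝ) * lam k) ≤ 1}.Infinite

/-- `M(σ) = ∫₀^σ m(s) ds`. -/
noncomputable def Mfun (m : ℝ → ℝ) (σ : ℝ) : ℝ := ∫ s in (0:ℝ)..σ, m s

/-- The conserved quantity `H₀ = Σ_i b_i² + M(Σ_i λ_i² a_i²)`. -/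
noncomputable def H0 (lam : ℕ → ℝ) (m : ℝ → ℝ) (a b : ℕ → ℝ) : ℝ :=
  (∑' i, (b i) ^ 2) + Mfun m (∑' i, (lam i) ^ 2 * (a i) ^ 2)

/-- Galerkin approximation of order `n` (components of index `> n` extended by zero):
the solution of `v_i'' + m(Σ_{j≤n} λ_j² v_j²) λ_i² v_i = 0` for `i ≤ n`, with
`v_i(0) = a_i`, `v_i'(0) = b_i`. -/
def GalerkinSol (lam : ℕ → ℝ) (m : ℝ → ℝ) (a b : ℕ → ℝ) (n : ℕ)
    (v : ℕ → ℝ → ℝ) : Prop :=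
  (∀ i, ContDiffOn ℝ 2 (v i) (Set.Ici 0)) ∧
  (∀ i ≤ n, v i 0 = a i) ∧
  (∀ i ≤ n, derIci (v i) 0 = b i) ∧
  (∀ i, n < i → ∀ t, v i t = 0) ∧
  (∀ i ≤ n, ∀ t, 0 ≤ t →
    derIci (derIci (v i)) t
      + m (∑ j ∈ Finset.range (n + 1), (lam j) ^ 2 * (v j t) ^ 2)
        * (lam i) ^ 2 * v i t = 0)

/-- Global weak solution with initial data `(a,b)`: a family `v_i ∈ C²([0,∞))` with
`v_i(0) = a_i`, `v_i'(0) = b_i`, such that `Σ v_i'(t)²` and `Σ λ_i² v_i(t)²` converge,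
the maps `t ↦ (v_i'(t))_i` and `t ↦ (λ_i v_i(t))_i` are continuous from `[0,∞)` into
`ℓ²`, and `v_i'' + m(Σ_j λ_j² v_j²) λ_i² v_i = 0` for every `i` and every `t ≥ 0`. -/
def WeakSol (lam : ℕ → ℝ) (m : ℝ → ℝ) (a b : ℕ → ℝ) (v : ℕ → ℝ → ℝ) : Prop :=
  (∀ i, ContDiffOn ℝ 2 (v i) (Set.Ici 0)) ∧
  (∀ i, v i 0 = a i) ∧
  (∀ i, derIci (v i) 0 = b i) ∧
  (∀ t, 0 ≤ t → Summable fun i => (derIci (v i) t) ^ 2) ∧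
  (∀ t, 0 ≤ t → Summable fun i => (lam i) ^ 2 * (v i t) ^ 2) ∧
  (∀ t₀, 0 ≤ t₀ → Tendsto (fun t => ∑' i, (derIci (v i) t - derIci (v i) t₀) ^ 2)
      (nhdsWithin t₀ (Set.Ici 0)) (nhds 0)) ∧
  (∀ t₀, 0 ≤ t₀ → Tendsto (fun t => ∑' i, (lam i) ^ 2 * (v i t - v i t₀) ^ 2)
      (nhdsWithin t₀ (Set.Ici 0)) (nhds 0)) ∧
  (∀ i, ∀ t, 0 ≤ t →
    derIci (derIci (v i)) t
      + m (∑' j, (lam j) ^ 2 * (v j t) ^ 2) * (lam i) ^ 2 * v i t = 0)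

theorem le_mul_exp_of_hasDerivWithinAt_le {f f' : ℝ → ℝ} {K a : ℝ}
    (hf : ∀ x ∈ Ici a, HasDerivWithinAt f (f' x) (Ici a) x)
    (bound : ∀ x ∈ Ici a, f' x ≤ K * f x) {t : ℝ} (ht : a ≤ t) :
    f t ≤ f a * Real.exp (K * (t - a)) := by
  have h := le_gronwallBound_of_liminf_deriv_right_le (ε := 0)
    (fun x hx => (hf x hx.1).continuousWithinAt.mono Icc_subset_Ici_self)
    (fun x hx _ hr => ((hf x hx.1).mono (Ici_subset_Ici.2 hx.1)).liminf_right_slope_le hr)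
    le_rfl (fun x hx => by simpa using bound x hx.1) t ⟨ht, le_rfl⟩
  rwa [gronwallBound_ε0] at h

theorem Finset.sum_range_add_sum_Icc {M : Type*} [AddCommMonoid M] (f : ℕ → M) {k n : ℕ}
    (h : k ≤ n) :
    ∑ i ∈ Finset.range (k + 1), f i + ∑ i ∈ Finset.Icc (k + 1) n, f i
      = ∑ i ∈ Finset.range (n + 1), f i := by
  rw [← Finset.Ico_add_one_right_eq_Icc]
  exact Finset.sum_range_add_sum_Ico f (by omega)

theorem hasDerivWithinAt_derIci {f : ℝ → ℝ} {N : WithTop ℕ∞} (hf : ContDiffOn ℝ N f (Ici 0))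
    (hN : 1 ≤ N) {t : ℝ} (ht : 0 ≤ t) : HasDerivWithinAt f (derIci f t) (Ici 0) t :=
  (hf.differentiableOn (zero_lt_one.trans_le hN).ne' t ht).hasDerivWithinAt

theorem hasDerivWithinAt_derIci_derIci {f : ℝ → ℝ} (hf : ContDiffOn ℝ 2 f (Ici 0))
    {t : ℝ} (ht : 0 ≤ t) : HasDerivWithinAt (derIci f) (derIci (derIci f) t) (Ici 0) t :=
  hasDerivWithinAt_derIci (hf.derivWithin (m := 1) (uniqueDiffOn_Ici 0) le_rfl) le_rfl ht

theorem mul_abs_sq_mul_two_mul_le {c l Λ x y : ℝ} (hc : 0 ≤ c) (hl : 0 ≤ l) (hlΛ : l ≤ Λ) :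
    c * |l ^ 2 * (2 * x * y)| ≤ Λ * (c ^ 2 * (l ^ 2 * x ^ 2) + y ^ 2) := by
  have hyoung : |2 * (c * l * x) * y| ≤ (c * l * x) ^ 2 + y ^ 2 :=
    abs_le.2 ⟨by nlinarith [sq_nonneg (c * l * x + y)], by nlinarith [sq_nonneg (c * l * x - y)]⟩
  calc c * |l ^ 2 * (2 * x * y)| = l * |2 * (c * l * x) * y| := by
        simp only [abs_mul, abs_pow, abs_two, abs_of_nonneg hc, abs_of_nonneg hl]
        ring
    _ ≤ Λ * ((c * l * x) ^ 2 + y ^ 2) := mul_le_mul hlΛ hyoung (abs_nonneg _) (hl.trans hlΛ)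
    _ = Λ * (c ^ 2 * (l ^ 2 * x ^ 2) + y ^ 2) := by ring

section Primitive

variable {m : ℝ → ℝ}

theorem hasDerivWithinAt_Mfun (hm : ContinuousOn m (Ici 0)) {x : ℝ} (hx : 0 ≤ x) :
    HasDerivWithinAt (Mfun m) (m x) (Ici 0) x := by
  -- `s ↦ m (max s 0)` is continuous on all of `ℝ`, so its primitive is differentiable at `0` too
  set m₀ : ℝ → ℝ := fun s => m (max s 0)
  have hm₀ : Continuous m₀ :=
    hm.comp_continuous (continuous_id.max continuous_const) fun s => le_max_right s 0
  have h := intervalIntegral.integral_hasDerivAt_right (hm₀.intervalIntegrable 0 x)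
    (hm₀.stronglyMeasurableAtFilter _ _) hm₀.continuousAt
  refine (h.hasDerivWithinAt.congr (fun y hy => ?_) ?_).congr_deriv (by simp [m₀, hx])
  all_goals
    refine intervalIntegral.integral_congr fun s hs => ?_
    rw [uIcc_of_le (by assumption)] at hs
    simp [m₀, hs.1]

theorem Mfun_sub_eq (hm : ContinuousOn m (Ici 0)) {x y : ℝ} (hx : 0 ≤ x) (hy : 0 ≤ y) :
    Mfun m y - Mfun m x = ∫ s in x..y, m s := by
  have hI : ∀ z, 0 ≤ z → IntervalIntegrable m MeasureTheory.volume 0 z := fun z hz =>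
    (hm.mono Icc_subset_Ici_self).intervalIntegrable_of_Icc hz
  exact intervalIntegral.integral_interval_sub_left (hI y hy) (hI x hx)

theorem mul_sub_le_Mfun_sub (hm : ContinuousOn m (Ici 0)) {μ : ℝ}
    (hlb : ∀ σ, 0 ≤ σ → μ ≤ m σ) {x y : ℝ} (hx : 0 ≤ x) (hxy : x ≤ y) :
    μ * (y - x) ≤ Mfun m y - Mfun m x := by
  rw [Mfun_sub_eq hm hx (hx.trans hxy), mul_comm, ← smul_eq_mul, ← intervalIntegral.integral_const]
  exact intervalIntegral.integral_mono_on hxy intervalIntegrable_const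
    ((hm.mono fun s hs => hx.trans hs.1).intervalIntegrable_of_Icc hxy)
    fun s hs => hlb s (hx.trans hs.1)

theorem Mfun_sub_le_mul_sub (hm : ContinuousOn m (Ici 0)) {μ : ℝ}
    (hub : ∀ σ, 0 ≤ σ → m σ ≤ μ) {x y : ℝ} (hx : 0 ≤ x) (hxy : x ≤ y) :
    Mfun m y - Mfun m x ≤ μ * (y - x) := by
  rw [Mfun_sub_eq hm hx (hx.trans hxy), mul_comm, ← smul_eq_mul, ← intervalIntegral.integral_const]
  exact intervalIntegral.integral_mono_on hxy
    ((hm.mono fun s hs => hx.trans hs.1).intervalIntegrable_of_Icc hxy) intervalIntegrable_const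
    fun s hs => hub s (hx.trans hs.1)

end Primitive

section Modes

variable {lam : ℕ → ℝ} {m : ℝ → ℝ} {v : ℕ → ℝ → ℝ} {k n : ℕ}

noncomputable def potentialSum (lam : ℕ → ℝ) (v : ℕ → ℝ → ℝ) (S : Finset ℕ) (t : ℝ) : ℝ :=
  ∑ j ∈ S, lam j ^ 2 * v j t ^ 2

noncomputable def kineticSum (v : ℕ → ℝ → ℝ) (S : Finset ℕ) (t : ℝ) : ℝ :=
  ∑ j ∈ S, derIci (v j) t ^ 2

noncomputable def potentialSumDeriv (lam : ℕ → ℝ) (v : ℕ → ℝ → ℝ) (S : Finset ℕ) (t : ℝ) : ℝ :=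
  ∑ j ∈ S, lam j ^ 2 * (2 * v j t * derIci (v j) t)

theorem potentialSum_nonneg (S : Finset ℕ) (t : ℝ) : 0 ≤ potentialSum lam v S t :=
  Finset.sum_nonneg fun _ _ => by positivity

theorem kineticSum_nonneg (S : Finset ℕ) (t : ℝ) : 0 ≤ kineticSum v S t :=
  Finset.sum_nonneg fun _ _ => by positivity

theorem potentialSum_range_add_Icc (hkn : k ≤ n) (t : ℝ) :
    potentialSum lam v (Finset.range (k + 1)) t + potentialSum lam v (Finset.Icc (k + 1) n) t
      = potentialSum lam v (Finset.range (n + 1)) t :=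
  Finset.sum_range_add_sum_Icc _ hkn

theorem kineticSum_range_add_Icc (hkn : k ≤ n) (t : ℝ) :
    kineticSum v (Finset.range (k + 1)) t + kineticSum v (Finset.Icc (k + 1) n) t
      = kineticSum v (Finset.range (n + 1)) t :=
  Finset.sum_range_add_sum_Icc _ hkn

theorem potentialSumDeriv_range_add_Icc (hkn : k ≤ n) (t : ℝ) :
    potentialSumDeriv lam v (Finset.range (k + 1)) t
        + potentialSumDeriv lam v (Finset.Icc (k + 1) n) t
      = potentialSumDeriv lam v (Finset.range (n + 1)) t :=
  Finset.sum_range_add_sum_Icc _ hkn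

theorem hasDerivWithinAt_potentialSum (hreg : ∀ i, ContDiffOn ℝ 2 (v i) (Ici 0))
    (S : Finset ℕ) {t : ℝ} (ht : 0 ≤ t) :
    HasDerivWithinAt (potentialSum lam v S) (potentialSumDeriv lam v S t) (Ici 0) t := by
  refine HasDerivWithinAt.fun_sum fun j _ => ?_
  refine (((hasDerivWithinAt_derIci (hreg j) one_le_two ht).fun_pow 2).const_mul
    (lam j ^ 2)).congr_deriv ?_
  push_cast
  ring

theorem hasDerivWithinAt_kineticSum (hreg : ∀ i, ContDiffOn ℝ 2 (v i) (Ici 0))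
    (S : Finset ℕ) {t : ℝ} (ht : 0 ≤ t) :
    HasDerivWithinAt (kineticSum v S)
      (∑ j ∈ S, 2 * derIci (v j) t * derIci (derIci (v j)) t) (Ici 0) t := by
  refine HasDerivWithinAt.fun_sum fun j _ => ?_
  refine ((hasDerivWithinAt_derIci_derIci (hreg j) ht).fun_pow 2).congr_deriv ?_
  push_cast
  ring

theorem hasDerivWithinAt_Mfun_potentialSum (hreg : ∀ i, ContDiffOn ℝ 2 (v i) (Ici 0))
    (hm : ContinuousOn m (Ici 0)) (S : Finset ℕ) {t : ℝ} (ht : 0 ≤ t) :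
    HasDerivWithinAt (fun s => Mfun m (potentialSum lam v S s))
      (m (potentialSum lam v S t) * potentialSumDeriv lam v S t) (Ici 0) t :=
  (hasDerivWithinAt_Mfun hm (potentialSum_nonneg S t)).comp t
    (hasDerivWithinAt_potentialSum hreg S ht) fun s _ => potentialSum_nonneg S s

theorem mul_abs_potentialSumDeriv_le (hpos : ∀ i, 0 ≤ lam i) (hmono : Monotone lam)
    {c : ℝ} (hc : 0 ≤ c) (k : ℕ) (t : ℝ) :
    c * |potentialSumDeriv lam v (Finset.range (k + 1)) t|
      ≤ lam k * (c ^ 2 * potentialSum lam v (Finset.range (k + 1)) t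
        + kineticSum v (Finset.range (k + 1)) t) := by
  rw [potentialSum, kineticSum, Finset.mul_sum, ← Finset.sum_add_distrib, Finset.mul_sum]
  refine (mul_le_mul_of_nonneg_left (Finset.abs_sum_le_sum_abs _ _) hc).trans ?_
  rw [Finset.mul_sum]
  exact Finset.sum_le_sum fun j hj =>
    mul_abs_sq_mul_two_mul_le hc (hpos j) (hmono (Finset.mem_range_succ_iff.mp hj))

end Modes

section HighModes

variable {lam : ℕ → ℝ} {m : ℝ → ℝ} {v : ℕ → ℝ → ℝ} {k n : ℕ}

noncomputable def highFunctional (lam : ℕ → ℝ) (m : ℝ → ℝ) (v : ℕ → ℝ → ℝ) (k n : ℕ)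
    (t : ℝ) : ℝ :=
  kineticSum v (Finset.Icc (k + 1) n) t
    + (Mfun m (potentialSum lam v (Finset.range (n + 1)) t)
      - Mfun m (potentialSum lam v (Finset.range (k + 1)) t))

theorem mul_potentialSum_Icc_le_Mfun_sub (hm : ContinuousOn m (Ici 0)) {μ : ℝ}
    (hlb : ∀ σ, 0 ≤ σ → μ ≤ m σ) (hkn : k ≤ n) (t : ℝ) :
    μ * potentialSum lam v (Finset.Icc (k + 1) n) t
      ≤ Mfun m (potentialSum lam v (Finset.range (n + 1)) t)
        - Mfun m (potentialSum lam v (Finset.range (k + 1)) t) := by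
  have h := mul_sub_le_Mfun_sub hm hlb
    (potentialSum_nonneg (lam := lam) (v := v) (Finset.range (k + 1)) t)
    (le_add_of_nonneg_right (potentialSum_nonneg (lam := lam) (v := v) (Finset.Icc (k + 1) n) t))
  rwa [add_sub_cancel_left, potentialSum_range_add_Icc hkn] at h

theorem Mfun_sub_le_mul_potentialSum_Icc (hm : ContinuousOn m (Ici 0)) {μ : ℝ}
    (hub : ∀ σ, 0 ≤ σ → m σ ≤ μ) (hkn : k ≤ n) (t : ℝ) :
    Mfun m (potentialSum lam v (Finset.range (n + 1)) t)
        - Mfun m (potentialSum lam v (Finset.range (k + 1)) t)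
      ≤ μ * potentialSum lam v (Finset.Icc (k + 1) n) t := by
  have h := Mfun_sub_le_mul_sub hm hub
    (potentialSum_nonneg (lam := lam) (v := v) (Finset.range (k + 1)) t)
    (le_add_of_nonneg_right (potentialSum_nonneg (lam := lam) (v := v) (Finset.Icc (k + 1) n) t))
  rwa [add_sub_cancel_left, potentialSum_range_add_Icc hkn] at h

theorem mul_highEnergy_le_highFunctional (hm : ContinuousOn m (Ici 0)) {μ : ℝ}
    (hμ : μ ≤ 1) (hlb : ∀ σ, 0 ≤ σ → μ ≤ m σ) (hkn : k ≤ n) (t : ℝ) :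
    μ * (kineticSum v (Finset.Icc (k + 1) n) t + potentialSum lam v (Finset.Icc (k + 1) n) t)
      ≤ highFunctional lam m v k n t := by
  have hM := mul_potentialSum_Icc_le_Mfun_sub (lam := lam) (v := v) hm hlb hkn t
  have hK := mul_le_mul_of_nonneg_right hμ (kineticSum_nonneg (v := v) (Finset.Icc (k + 1) n) t)
  rw [highFunctional]
  linarith

theorem highFunctional_le_mul_highEnergy (hm : ContinuousOn m (Ici 0)) {μ : ℝ}
    (hμ : 1 ≤ μ) (hub : ∀ σ, 0 ≤ σ → m σ ≤ μ) (hkn : k ≤ n) (t : ℝ) :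
    highFunctional lam m v k n t
      ≤ μ * (kineticSum v (Finset.Icc (k + 1) n) t
        + potentialSum lam v (Finset.Icc (k + 1) n) t) := by
  have hM := Mfun_sub_le_mul_potentialSum_Icc (lam := lam) (v := v) hm hub hkn t
  have hK := mul_le_mul_of_nonneg_right hμ (kineticSum_nonneg (v := v) (Finset.Icc (k + 1) n) t)
  rw [highFunctional]
  linarith

end HighModes

namespace GalerkinSol

variable {lam : ℕ → ℝ} {m : ℝ → ℝ} {a b : ℕ → ℝ} {n : ℕ} {v : ℕ → ℝ → ℝ} {k : ℕ}

theorem hasDerivWithinAt_kineticSum_of_subset (hv : GalerkinSol lam m a b n v)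
    {S : Finset ℕ} (hS : S ⊆ Finset.range (n + 1)) {t : ℝ} (ht : 0 ≤ t) :
    HasDerivWithinAt (kineticSum v S)
      (-(m (potentialSum lam v (Finset.range (n + 1)) t) * potentialSumDeriv lam v S t))
      (Ici 0) t := by
  refine (_root_.hasDerivWithinAt_kineticSum hv.1 S ht).congr_deriv ?_
  rw [potentialSumDeriv, Finset.mul_sum, ← Finset.sum_neg_distrib]
  refine Finset.sum_congr rfl fun j hj => ?_
  have hode := hv.2.2.2.2 j (Finset.mem_range_succ_iff.mp (hS hj)) t ht
  rw [eq_neg_of_add_eq_zero_left hode, potentialSum]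
  ring

theorem energy_eq (hv : GalerkinSol lam m a b n v) (hm : ContinuousOn m (Ici 0))
    {t : ℝ} (ht : 0 ≤ t) :
    kineticSum v (Finset.range (n + 1)) t + Mfun m (potentialSum lam v (Finset.range (n + 1)) t)
      = kineticSum v (Finset.range (n + 1)) 0
        + Mfun m (potentialSum lam v (Finset.range (n + 1)) 0) := by
  have hderiv : ∀ s ∈ Ici (0 : ℝ), HasDerivWithinAt
      (fun s => kineticSum v (Finset.range (n + 1)) s
        + Mfun m (potentialSum lam v (Finset.range (n + 1)) s)) 0 (Ici 0) s := fun s hs =>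
    ((hv.hasDerivWithinAt_kineticSum_of_subset subset_rfl hs).add
      (hasDerivWithinAt_Mfun_potentialSum hv.1 hm _ hs)).congr_deriv (by ring)
  exact constant_of_has_deriv_right_zero
    (fun s hs => (hderiv s hs.1).continuousWithinAt.mono Icc_subset_Ici_self)
    (fun s hs => (hderiv s hs.1).mono (Ici_subset_Ici.2 hs.1)) t ⟨ht, le_rfl⟩

theorem energy_le_H0 (hv : GalerkinSol lam m a b n v) (hm : ContinuousOn m (Ici 0))
    (hm_nonneg : ∀ σ, 0 ≤ σ → 0 ≤ m σ) (hab : InEnergy lam a b) {t : ℝ} (ht : 0 ≤ t) :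
    kineticSum v (Finset.range (n + 1)) t + Mfun m (potentialSum lam v (Finset.range (n + 1)) t)
      ≤ H0 lam m a b := by
  have hb : Summable fun i => b i ^ 2 :=
    hab.of_nonneg_of_le (fun _ => sq_nonneg _) fun _ => le_add_of_nonneg_right (by positivity)
  have ha : Summable fun i => lam i ^ 2 * a i ^ 2 :=
    hab.of_nonneg_of_le (fun _ => by positivity) fun _ => le_add_of_nonneg_left (sq_nonneg _)
  have hkin : kineticSum v (Finset.range (n + 1)) 0 ≤ ∑' i, b i ^ 2 := by
    rw [kineticSum, Finset.sum_congr rfl fun j hj => by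
      rw [hv.2.2.1 j (Finset.mem_range_succ_iff.mp hj)]]
    exact hb.sum_le_tsum _ fun _ _ => sq_nonneg _
  have hpot : potentialSum lam v (Finset.range (n + 1)) 0 ≤ ∑' i, lam i ^ 2 * a i ^ 2 := by
    rw [potentialSum, Finset.sum_congr rfl fun j hj => by
      rw [hv.2.1 j (Finset.mem_range_succ_iff.mp hj)]]
    exact ha.sum_le_tsum _ fun _ _ => by positivity
  have hM := mul_sub_le_Mfun_sub hm hm_nonneg (potentialSum_nonneg _ 0) hpot
  rw [hv.energy_eq hm ht, H0]
  linarith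

theorem hasDerivWithinAt_highFunctional (hv : GalerkinSol lam m a b n v)
    (hm : ContinuousOn m (Ici 0)) (hkn : k ≤ n) {t : ℝ} (ht : 0 ≤ t) :
    HasDerivWithinAt (highFunctional lam m v k n)
      ((m (potentialSum lam v (Finset.range (n + 1)) t)
          - m (potentialSum lam v (Finset.range (k + 1)) t))
        * potentialSumDeriv lam v (Finset.range (k + 1)) t) (Ici 0) t := by
  have hkin := hv.hasDerivWithinAt_kineticSum_of_subset (S := Finset.Icc (k + 1) n)
    (fun j hj => Finset.mem_range_succ_iff.2 (Finset.mem_Icc.1 hj).2) ht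
  have hall := hasDerivWithinAt_Mfun_potentialSum (lam := lam) hv.1 hm (Finset.range (n + 1)) ht
  have hlow := hasDerivWithinAt_Mfun_potentialSum (lam := lam) hv.1 hm (Finset.range (k + 1)) ht
  refine (hkin.add (hall.sub hlow)).congr_deriv ?_
  rw [← potentialSumDeriv_range_add_Icc hkn]
  ring

theorem mul_abs_potentialSumDeriv_le_H0 (hv : GalerkinSol lam m a b n v)
    (hm : ContinuousOn m (Ici 0)) (hpos : ∀ i, 0 ≤ lam i) (hmono : Monotone lam)
    {μ₁ ν : ℝ} (hν : 0 ≤ ν) (hνμ : ν ^ 2 ≤ μ₁) (hm_lb : ∀ σ, 0 ≤ σ → μ₁ ≤ m σ)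
    (hab : InEnergy lam a b) (hkn : k ≤ n) {t : ℝ} (ht : 0 ≤ t) :
    ν * |potentialSumDeriv lam v (Finset.range (k + 1)) t| ≤ lam k * H0 lam m a b := by
  have hμ₁ : 0 ≤ μ₁ := (sq_nonneg ν).trans hνμ
  have hM : μ₁ * potentialSum lam v (Finset.range (n + 1)) t
      ≤ Mfun m (potentialSum lam v (Finset.range (n + 1)) t) := by
    simpa [Mfun] using mul_sub_le_Mfun_sub hm hm_lb le_rfl (potentialSum_nonneg _ t)
  have hE := hv.energy_le_H0 hm (fun σ hσ => hμ₁.trans (hm_lb σ hσ)) hab ht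
  have hpot := potentialSum_range_add_Icc (lam := lam) (v := v) hkn t
  have hkin := kineticSum_range_add_Icc (v := v) hkn t
  have hlow : ν ^ 2 * potentialSum lam v (Finset.range (k + 1)) t
        + kineticSum v (Finset.range (k + 1)) t ≤ H0 lam m a b := by
    nlinarith [potentialSum_nonneg (lam := lam) (v := v) (Finset.range (k + 1)) t,
      potentialSum_nonneg (lam := lam) (v := v) (Finset.Icc (k + 1) n) t,
      kineticSum_nonneg (v := v) (Finset.Icc (k + 1) n) t]
  exact (mul_abs_potentialSumDeriv_le hpos hmono hν k t).trans
    (mul_le_mul_of_nonneg_left hlow (hpos k))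

theorem highFunctional_deriv_le (hv : GalerkinSol lam m a b n v)
    (hm : ContinuousOn m (Ici 0)) (hpos : ∀ i, 0 ≤ lam i) (hmono : Monotone lam)
    {μ₁ ν L : ℝ} (hν : 0 < ν) (hν1 : ν ≤ 1) (hνμ : ν ≤ μ₁) (hm_lb : ∀ σ, 0 ≤ σ → μ₁ ≤ m σ)
    (hL : 0 ≤ L) (hm_lip : ∀ σ₁ σ₂, 0 ≤ σ₁ → 0 ≤ σ₂ → |m σ₂ - m σ₁| ≤ L * |σ₂ - σ₁|)
    (hab : InEnergy lam a b) (hkn : k ≤ n) {t : ℝ} (ht : 0 ≤ t) :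
    (m (potentialSum lam v (Finset.range (n + 1)) t)
        - m (potentialSum lam v (Finset.range (k + 1)) t))
      * potentialSumDeriv lam v (Finset.range (k + 1)) t
      ≤ L * H0 lam m a b * lam k / ν ^ 2 * highFunctional lam m v k n t := by
  set τ := potentialSum lam v (Finset.Icc (k + 1) n) t
  have hτ : 0 ≤ τ := potentialSum_nonneg _ t
  have hlip : |m (potentialSum lam v (Finset.range (n + 1)) t)
      - m (potentialSum lam v (Finset.range (k + 1)) t)| ≤ L * τ := by
    rw [← potentialSum_range_add_Icc hkn t]
    have h := hm_lip (potentialSum lam v (Finset.range (k + 1)) t)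
      (potentialSum lam v (Finset.range (k + 1)) t + τ) (potentialSum_nonneg _ t)
      (add_nonneg (potentialSum_nonneg _ t) hτ)
    rwa [add_sub_cancel_left, abs_of_nonneg hτ] at h
  have hrate := hv.mul_abs_potentialSumDeriv_le_H0 hm hpos hmono hν.le
    ((pow_le_of_le_one hν.le hν1 two_ne_zero).trans hνμ) hm_lb hab hkn ht
  have hF : ν * τ ≤ highFunctional lam m v k n t := by
    have h := mul_highEnergy_le_highFunctional (lam := lam) (v := v) hm hν1
      (fun σ hσ => hνμ.trans (hm_lb σ hσ)) hkn t
    nlinarith [kineticSum_nonneg (v := v) (Finset.Icc (k + 1) n) t]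
  rw [div_mul_eq_mul_div, le_div_iff₀ (by positivity)]
  calc _ ≤ |m (potentialSum lam v (Finset.range (n + 1)) t)
          - m (potentialSum lam v (Finset.range (k + 1)) t)|
          * |potentialSumDeriv lam v (Finset.range (k + 1)) t| * ν ^ 2 := by
        rw [← abs_mul]
        exact mul_le_mul_of_nonneg_right (le_abs_self _) (sq_nonneg ν)
    _ ≤ L * τ * |potentialSumDeriv lam v (Finset.range (k + 1)) t| * ν ^ 2 := by gcongr
    _ = L * (ν * τ) * (ν * |potentialSumDeriv lam v (Finset.range (k + 1)) t|) := by ring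
    _ ≤ L * highFunctional lam m v k n t * (lam k * H0 lam m a b) :=
        mul_le_mul (mul_le_mul_of_nonneg_left hF hL) hrate (by positivity)
          (mul_nonneg hL ((mul_nonneg hν.le hτ).trans hF))
    _ = _ := by ring

theorem highFunctional_le_mul_exp (hv : GalerkinSol lam m a b n v)
    (hm : ContinuousOn m (Ici 0)) (hpos : ∀ i, 0 ≤ lam i) (hmono : Monotone lam)
    {μ₁ ν L : ℝ} (hν : 0 < ν) (hν1 : ν ≤ 1) (hνμ : ν ≤ μ₁) (hm_lb : ∀ σ, 0 ≤ σ → μ₁ ≤ m σ)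
    (hL : 0 ≤ L) (hm_lip : ∀ σ₁ σ₂, 0 ≤ σ₁ → 0 ≤ σ₂ → |m σ₂ - m σ₁| ≤ L * |σ₂ - σ₁|)
    (hab : InEnergy lam a b) (hkn : k ≤ n) {t : ℝ} (ht : 0 ≤ t) :
    highFunctional lam m v k n t
      ≤ highFunctional lam m v k n 0 * Real.exp (L * H0 lam m a b * lam k * t / ν ^ 2) := by
  have h := le_mul_exp_of_hasDerivWithinAt_le
    (fun s hs => hv.hasDerivWithinAt_highFunctional hm hkn hs)
    (fun s hs => hv.highFunctional_deriv_le hm hpos hmono hν hν1 hνμ hm_lb hL hm_lip hab hkn hs) ht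
  rwa [sub_zero, div_mul_eq_mul_div] at h

theorem highEnergy_zero_le_Rk (hv : GalerkinSol lam m a b n v) (hab : InEnergy lam a b) :
    kineticSum v (Finset.Icc (k + 1) n) 0 + potentialSum lam v (Finset.Icc (k + 1) n) 0
      ≤ Rk lam a b k := by
  have hterm : ∀ i, 0 ≤ if k < i then b i ^ 2 + lam i ^ 2 * a i ^ 2 else 0 := fun i => by
    split_ifs <;> positivity
  have hsum : Summable fun i => if k < i then b i ^ 2 + lam i ^ 2 * a i ^ 2 else 0 :=
    hab.of_nonneg_of_le hterm fun i => by
      split_ifs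
      exacts [le_rfl, by positivity]
  rw [kineticSum, potentialSum, ← Finset.sum_add_distrib, Rk]
  refine (Finset.sum_congr rfl fun i hi => ?_).trans_le
    (hsum.sum_le_tsum (Finset.Icc (k + 1) n) fun i _ => hterm i)
  obtain ⟨hki, hin⟩ := Finset.mem_Icc.mp hi
  rw [if_pos (Nat.lt_of_succ_le hki), hv.2.1 i hin, hv.2.2.1 i hin]

end GalerkinSol

theorem stmt10_general (lam : ℕ → ℝ) (hpos : ∀ i, 0 < lam i) (hmono : Monotone lam)
    (μ₁ μ₂ L : ℝ) (hμ₁ : 0 < μ₁) (hL : 0 < L) (m : ℝ → ℝ)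
    (hm_reg : ContDiffOn ℝ 1 m (Set.Ici 0))
    (hm_lb : ∀ σ, 0 ≤ σ → μ₁ ≤ m σ) (hm_ub : ∀ σ, 0 ≤ σ → m σ ≤ μ₂)
    (hm_lip : ∀ σ₁ σ₂, 0 ≤ σ₁ → 0 ≤ σ₂ → |m σ₂ - m σ₁| ≤ L * |σ₂ - σ₁|)
    (a b : ℕ → ℝ) (hab : InEnergy lam a b)
    (k n : ℕ) (hkn : k < n)
    (v : ℕ → ℝ → ℝ) (hv : GalerkinSol lam m a b n v) :
    ∀ t, 0 ≤ t →
      (∑ i ∈ Finset.Icc (k + 1) n, ((derIci (v i) t) ^ 2 + (lam i) ^ 2 * (v i t) ^ 2))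
        ≤ Rk lam a b k *
          ((max 1 μ₂ / min 1 μ₁)
            * Real.exp (L * H0 lam m a b * lam k * t / (min 1 μ₁) ^ 2)) := by
  intro t ht
  set ν₁ := min 1 μ₁
  set ν₂ := max 1 μ₂
  set E := Real.exp (L * H0 lam m a b * lam k * t / ν₁ ^ 2)
  have hν₁ : 0 < ν₁ := lt_min one_pos hμ₁
  have hm := hm_reg.continuousOn
  have hlow := mul_highEnergy_le_highFunctional (lam := lam) (v := v) hm (min_le_left 1 μ₁)
    (fun σ hσ => (min_le_right 1 μ₁).trans (hm_lb σ hσ)) hkn.le t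
  have hgrowth := hv.highFunctional_le_mul_exp hm (fun i => (hpos i).le) hmono hν₁
    (min_le_left 1 μ₁) (min_le_right 1 μ₁) hm_lb hL.le hm_lip hab hkn.le ht
  have hhigh := highFunctional_le_mul_highEnergy (lam := lam) (v := v) hm (le_max_left 1 μ₂)
    (fun σ hσ => (hm_ub σ hσ).trans (le_max_right 1 μ₂)) hkn.le 0
  have hinit := hv.highEnergy_zero_le_Rk (k := k) hab
  rw [Finset.sum_add_distrib,
    show Rk lam a b k * (ν₂ / ν₁ * E) = ν₂ * Rk lam a b k * E / ν₁ by ring, le_div_iff₀ hν₁]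
  calc _ = ν₁ * (kineticSum v (Finset.Icc (k + 1) n) t
        + potentialSum lam v (Finset.Icc (k + 1) n) t) := mul_comm _ _
    _ ≤ highFunctional lam m v k n 0 * E := hlow.trans hgrowth
    _ ≤ ν₂ * Rk lam a b k * E := by gcongr; exact hhigh.trans (by gcongr)

/-- uniform smallness of the high-frequency components of the Galerkin
approximations: the high-frequency energy is bounded by R_k(a,b)·L_k^+(t). -/
theorem stmt10 (lam : ℕ → ℝ) (hpos : ∀ i, 0 < lam i) (hmono : Monotone lam)
    (htop : Tendsto lam atTop atTop)
    (μ₁ μ₂ L : ℝ) (hμ₁ : 0 < μ₁) (hL : 0 < L) (m : ℝ → ℝ)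
    (hm_reg : ContDiffOn ℝ 1 m (Set.Ici 0))
    (hm_lb : ∀ σ, 0 ≤ σ → μ₁ ≤ m σ) (hm_ub : ∀ σ, 0 ≤ σ → m σ ≤ μ₂)
    (hm_lip : ∀ σ₁ σ₂, 0 ≤ σ₁ → 0 ≤ σ₂ → |m σ₂ - m σ₁| ≤ L * |σ₂ - σ₁|)
    (a b : ℕ → ℝ) (hab : InEnergy lam a b)
    (k n : ℕ) (hk : 0 < k) (hkn : k < n)
    (v : ℕ → ℝ → ℝ) (hv : GalerkinSol lam m a b n v) :
    ∀ t, 0 ≤ t →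
      (∑ i ∈ Finset.Icc (k + 1) n, ((derIci (v i) t) ^ 2 + (lam i) ^ 2 * (v i t) ^ 2))
        ≤ Rk lam a b k *
          ((max 1 μ₂ / min 1 μ₁)
            * Real.exp (L * H0 lam m a b * lam k * t / (min 1 μ₁) ^ 2)) :=
  stmt10_general lam hpos hmono μ₁ μ₂ L hμ₁ hL m hm_reg hm_lb hm_ub hm_lip a b hab k n hkn v hv
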